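/- arXiv:2212.11066 — 2 statements merged into one kernel-verified Lean document; each statement's English description precedes it below -/
import Mathlib

section
/- Let β, β' ∈ ℝ with β, β' ∉ {0,1} and β ≠ β'. Let Π^{(β)} denote the datum (writing points of ℝ³ as (x,y,t)) Π₁(x,y,t) = x+t, Π₂(x,y,t) = (x,y), Π₃(x,y,t) = (x+βt, y), Π₄(x,y,t) = t, and let Π^{(β')} be the analogous datum with β replaced by β'. Then Π^{(β)} and Π^{(β')} are not equivalent: there do not exist invertible linear maps B : ℝ³ → ℝ³, A₁, A₄ : ℝ → ℝ, and A₂, A₃ : ℝ² → ℝ² such that A_j ∘ Π^{(β)}_j ∘ B = Π^{(β')}_j for all j = 1,2,3,4. -/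
theorem stmt18 (β β' : ℝ) (hβ0 : β ≠ 0) (hβ1 : β ≠ 1) (hβ'0 : β' ≠ 0) (hβ'1 : β' ≠ 1)
    (hne : β ≠ β') :
    ¬ ∃ (B : (Fin 3 → ℝ) ≃ₗ[ℝ] (Fin 3 → ℝ)) (A₁ A₄ : ℝ ≃ₗ[ℝ] ℝ)
        (A₂ A₃ : (Fin 2 → ℝ) ≃ₗ[ℝ] (Fin 2 → ℝ)),
      (∀ v : Fin 3 → ℝ, A₁ (B v 0 + B v 2) = v 0 + v 2) ∧
      (∀ v : Fin 3 → ℝ, A₂ ![B v 0, B v 1] = ![v 0, v 1]) ∧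
      (∀ v : Fin 3 → ℝ, A₃ ![B v 0 + β * B v 2, B v 1] = ![v 0 + β' * v 2, v 1]) ∧
      (∀ v : Fin 3 → ℝ, A₄ (B v 2) = v 2) := by
  rintro ⟨B, A₁, A₄, A₂, A₃, h1, h2, h3, h4⟩
  set w := B ![0, 0, 1] with hw
  set z := B ![1, 0, 0] with hz
  have hzero : (![(0 : ℝ), 0] : Fin 2 → ℝ) = 0 := by
    funext i; fin_cases i <;> simp
  -- w 0 = 0
  have hw01 : (![w 0, w 1] : Fin 2 → ℝ) = ![0, 0] := by
    apply A₂.injective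
    rw [h2 ![0, 0, 1], hzero, map_zero]
    funext i; fin_cases i <;> simp
  have hw0 : w 0 = 0 := by
    have := congrFun hw01 0; simpa using this
  -- z 2 = 0
  have hz2 : z 2 = 0 := by
    have h4' : A₄ (z 2) = 0 := by simpa using h4 ![1, 0, 0]
    exact A₄.map_eq_zero_iff.mp h4'
  -- A₁ (z 0) = 1 and A₁ (w 2) = 1
  have hA1z : A₁ (z 0) = 1 := by
    have := h1 ![1, 0, 0]
    rw [← hz, hz2, add_zero] at this
    simpa using this
  have hA1w : A₁ (w 2) = 1 := by
    have := h1 ![0, 0, 1]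
    rw [← hw, hw0, zero_add] at this
    simpa using this
  have hzw : z 0 = w 2 := A₁.injective (hA1z.trans hA1w.symm)
  have hz0ne : z 0 ≠ 0 := by
    intro h
    rw [h, map_zero] at hA1z
    exact one_ne_zero hA1z.symm
  -- the kernel vector of Π₃^{(β')}
  have hvu : (![-β', 0, 1] : Fin 3 → ℝ) = (-β') • ![1, 0, 0] + ![0, 0, 1] := by
    funext i; fin_cases i <;> simp
  have hu : B ![-β', 0, 1] = (-β') • z + w := by
    rw [hvu, map_add, map_smul]
  have hker : (![B ![-β', 0, 1] 0 + β * B ![-β', 0, 1] 2, B ![-β', 0, 1] 1] : Fin 2 → ℝ)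
      = ![0, 0] := by
    apply A₃.injective
    rw [h3 ![-β', 0, 1], hzero, map_zero]
    funext i; fin_cases i <;> simp
  have h0 : B ![-β', 0, 1] 0 + β * B ![-β', 0, 1] 2 = 0 := by
    have := congrFun hker 0; simpa using this
  rw [hu] at h0
  have h0' : -(β' * z 0) + w 0 + β * (-(β' * z 2) + w 2) = 0 := by
    simpa using h0
  rw [hw0, hz2, hzw] at h0'
  have hsub : (β - β') * w 2 = 0 := by linear_combination h0'
  rcases mul_eq_zero.mp hsub with h | h
  · exact hne (sub_eq_zero.mp h)
  · exact hz0ne (hzw.trans h)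
end

section
/- Let α ∈ ℝ with α ≠ 1, and consider the datum of the form Λ̃_α, namely (writing points of ℝ³ as (x,y,z)) Π₁(x,y,z) = x + αy, Π₂(x,y,z) = (y,z), Π₃(x,y,z) = (z,x), Π₄(x,y,z) = x + y + z. Then there exist invertible linear maps B : ℝ³ → ℝ³, A₁, A₄ : ℝ → ℝ, and A₂, A₃ : ℝ² → ℝ² such that, writing points of the new coordinates ℝ³ as (x',y',t): A₁ ∘ Π₁ ∘ B = (the map (x',y',t) ↦ x'+t), A₂ ∘ Π₂ ∘ B = (the map (x',y',t) ↦ (x',y')), A₃ ∘ Π₃ ∘ B = (the map (x',y',t) ↦ (x'+(1-α)t, y')), and A₄ ∘ Π₄ ∘ B = (the map (x',y',t) ↦ t); i.e., the datum of Λ̃_α is equivalent to the datum of Λ_{(4,1-α)}. Explicitly, one may take A₁ = 1, A₄ = 1, A₂ = [[α-1, -1],[0,1]], A₃ = [[-α, 1-α],[1,0]], and B the matrix with rows (-1/(α-1), -α/(α-1), 1), (1/(α-1), 1/(α-1), 0), (0, 1, 0). -/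
/-- The datum of `Λ̃_α`, namely `Π₁(x,y,z) = x + αy`, `Π₂(x,y,z) = (y,z)`,
`Π₃(x,y,z) = (z,x)`, `Π₄(x,y,z) = x + y + z`, is equivalent (via invertible linear
maps `A₁, A₂, A₃, A₄, B`) to the datum of `Λ_{(4,1-α)}`, namely
`Π₁(x',y',t) = x'+t`, `Π₂(x',y',t) = (x',y')`, `Π₃(x',y',t) = (x'+(1-α)t, y')`,
`Π₄(x',y',t) = t`. -/
theorem stmt19 (α : ℝ) (hα : α ≠ 1) :
    ∃ (B : (Fin 3 → ℝ) ≃ₗ[ℝ] (Fin 3 → ℝ)) (A₁ A₄ : ℝ ≃ₗ[ℝ] ℝ)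
      (A₂ A₃ : (Fin 2 → ℝ) ≃ₗ[ℝ] (Fin 2 → ℝ)),
    (∀ v : Fin 3 → ℝ, A₁ (B v 0 + α * B v 1) = v 0 + v 2) ∧
    (∀ v : Fin 3 → ℝ, A₂ ![B v 1, B v 2] = ![v 0, v 1]) ∧
    (∀ v : Fin 3 → ℝ, A₃ ![B v 2, B v 0] = ![v 0 + (1 - α) * v 2, v 1]) ∧
    (∀ v : Fin 3 → ℝ, A₄ (B v 0 + B v 1 + B v 2) = v 2) := by
  have hne : α - 1 ≠ 0 := sub_ne_zero.mpr hα
  have hne' : (1 : ℝ) - α ≠ 0 := sub_ne_zero.mpr (Ne.symm hα)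
  refine ⟨
    { toFun := fun v => ![(-(v 0) - α * v 1) / (α - 1) + v 2, (v 0 + v 1) / (α - 1), v 1],
      invFun := fun w => ![(α - 1) * w 1 - w 2, w 2, w 0 + w 1 + w 2],
      map_add' := by
        intro a b; funext i; fin_cases i <;> simp <;> ring
      map_smul' := by
        intro c a; funext i; fin_cases i <;> simp <;> ring
      left_inv := by
        intro v; funext i; fin_cases i <;> simp <;> field_simp <;> ring
      right_inv := by
        intro w; funext i; fin_cases i <;> simp <;> field_simp <;> ring },
    LinearEquiv.refl ℝ ℝ, LinearEquiv.refl ℝ ℝ,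
    { toFun := fun w => ![(α - 1) * w 0 - w 1, w 1],
      invFun := fun w => ![(w 0 + w 1) / (α - 1), w 1],
      map_add' := by
        intro a b; funext i; fin_cases i <;> simp <;> ring
      map_smul' := by
        intro c a; funext i; fin_cases i <;> simp <;> ring
      left_inv := by
        intro w; funext i; fin_cases i <;> simp <;> field_simp <;> ring
      right_inv := by
        intro w; funext i; fin_cases i <;> simp <;> field_simp <;> ring },
    { toFun := fun w => ![-α * w 0 + (1 - α) * w 1, w 0],
      invFun := fun w => ![w 1, (w 0 + α * w 1) / (1 - α)],
      map_add' := by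
        intro a b; funext i; fin_cases i <;> simp <;> ring
      map_smul' := by
        intro c a; funext i; fin_cases i <;> simp <;> ring
      left_inv := by
        intro w; funext i; fin_cases i <;> simp <;> field_simp <;> ring
      right_inv := by
        intro w; funext i; fin_cases i <;> simp <;> field_simp <;> ring },
    ?_, ?_, ?_, ?_⟩ <;> intro v
  · show ((-(v 0) - α * v 1) / (α - 1) + v 2) + α * ((v 0 + v 1) / (α - 1)) = v 0 + v 2
    field_simp; ring
  · show (![(α - 1) * _ - _, _] : Fin 2 → ℝ) = _
    funext i; fin_cases i <;> simp <;> field_simp <;> ring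
  · funext i; fin_cases i <;> simp <;> field_simp <;> ring
  · show ((-(v 0) - α * v 1) / (α - 1) + v 2) + (v 0 + v 1) / (α - 1) + v 1 = v 2
    field_simp; ring
end
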